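/- Let G be a minimally bad graph and O = [v_1,…,v_n] a bad connected order of G. If P = a…b is a flat path in G, then either P is well ordered, or the source v_1 is an internal vertex of P and the subpaths aPv_1 and v_1Pb are both well ordered. In particular, at most one maximal flat path in G is not well ordered. -/

import Mathlib

open Classical in
noncomputable def greedyStep {V : Type*} (G : SimpleGraph V) (f : V → ℕ) (v : V) : V → ℕ :=
  fun u => if u = v then sInf {c : ℕ | 1 ≤ c ∧ ∀ w, G.Adj v w → f w ≠ c} else f u

noncomputable def greedyFrom {V : Type*} (G : SimpleGraph V) (f : V → ℕ) (l : List V) : V → ℕ :=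
  l.foldl (greedyStep G) f

noncomputable def greedy {V : Type*} (G : SimpleGraph V) (l : List V) : V → ℕ :=
  greedyFrom G (fun _ => 0) l

open Classical in
noncomputable def greedyStart2 {V : Type*} (G : SimpleGraph V) : List V → V → ℕ
  | [] => fun _ => 0
  | v :: rest => greedyFrom G (fun u => if u = v then 2 else 0) rest

noncomputable def chi {V : Type*} [Fintype V] (G : SimpleGraph V) : ℕ :=
  sInf {n : ℕ | G.Colorable n}

open Classical in
noncomputable def idx {V : Type*} (l : List V) (v : V) : ℕ := l.idxOf v

noncomputable def maxIdx {V : Type*} (l : List V) (A : Set V) : ℕ := sSup (idx l '' A)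
noncomputable def minIdx {V : Type*} (l : List V) (A : Set V) : ℕ := sInf (idx l '' A)

def IsConnOrder {V : Type*} (G : SimpleGraph V) (l : List V) : Prop :=
  l.Nodup ∧ (∀ v : V, v ∈ l) ∧
    ∀ i : Fin l.length, 0 < i.1 → ∃ j : Fin l.length, j.1 < i.1 ∧ G.Adj (l.get j) (l.get i)

def GoodOrder {V : Type*} [Fintype V] (G : SimpleGraph V) (l : List V) : Prop :=
  ∀ v : V, greedy G l v ≤ chi G

def Good {V : Type*} [Fintype V] (G : SimpleGraph V) : Prop :=
  ∀ s : Finset V, (G.induce (↑s : Set V)).Connected →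
    ∀ l : List ↥(↑s : Set V), IsConnOrder (G.induce (↑s : Set V)) l →
      GoodOrder (G.induce (↑s : Set V)) l

def BadOrder {V : Type*} [Fintype V] (G : SimpleGraph V) (l : List V) : Prop :=
  IsConnOrder G l ∧ ¬ GoodOrder G l

def MinimallyBad {V : Type*} [Fintype V] (G : SimpleGraph V) : Prop :=
  ¬ Good G ∧ ∀ s : Finset V, s ≠ Finset.univ →
    (G.induce (↑s : Set V)).Connected → Good (G.induce (↑s : Set V))

def IsInducedPath {V : Type*} (G : SimpleGraph V) (P : List V) : Prop :=
  P.Nodup ∧ ∀ i j : Fin P.length,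
    G.Adj (P.get i) (P.get j) ↔ (i.1 + 1 = j.1 ∨ j.1 + 1 = i.1)

def IsFlatPath {V : Type*} (G : SimpleGraph V) (P : List V) : Prop :=
  IsInducedPath G P ∧
    ∀ i : Fin P.length, 0 < i.1 → i.1 + 1 < P.length → (G.neighborSet (P.get i)).ncard = 2

def WellOrderedPath {V : Type*} (l P : List V) : Prop :=
  P.Pairwise (fun u v => idx l u < idx l v) ∨ P.Pairwise (fun u v => idx l v < idx l u)

def IsMaxFlatPath {V : Type*} (G : SimpleGraph V) (P : List V) : Prop :=
  IsFlatPath G P ∧ ∀ h : P ≠ [],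
    (G.neighborSet (P.head h)).ncard ≠ 2 ∧ (G.neighborSet (P.getLast h)).ncard ≠ 2

def ClawFree {V : Type*} (G : SimpleGraph V) : Prop :=
  ∀ a b c d : V, G.Adj a b → G.Adj a c → G.Adj a d → b ≠ c → b ≠ d → c ≠ d →
    G.Adj b c ∨ G.Adj b d ∨ G.Adj c d

def IsHole {V : Type*} (G : SimpleGraph V) (C : List V) : Prop :=
  4 ≤ C.length ∧ C.Nodup ∧
    ∀ i j : Fin C.length, G.Adj (C.get i) (C.get j) ↔
      ((i.1 + 1) % C.length = j.1 ∨ (j.1 + 1) % C.length = i.1)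

def GemFree {V : Type*} (G : SimpleGraph V) : Prop :=
  ¬ ∃ a b c d e : V, G.Adj a b ∧ G.Adj b c ∧ G.Adj c d ∧
    ¬ G.Adj a c ∧ ¬ G.Adj a d ∧ ¬ G.Adj b d ∧
    G.Adj e a ∧ G.Adj e b ∧ G.Adj e c ∧ G.Adj e d

/-!
Let p be a vertex with exactly two neighbours a and b. If both precede p in a bad order, then
G - p is connected and the order restricted to it is a connected order that gives every vertex its
colour in G; as G - p is good, p is the only vertex coloured above χ(G). Since p sees at most two
colours, χ(G) = 2 and a, b get the colours 1 and 2. But then greedy 2-colours the connected graph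
G - p, so it agrees up to a swap with any 2-colouring of G, in which a and b have the same colour.
In a connected order, on the other hand, only the source precedes both of its neighbours.

Along a flat path the order therefore has no interior peak, and its only possible valley is the
source: this is the first claim. Two maximal flat paths that are not well ordered both pass through
the source as an internal vertex, and two maximal flat paths sharing an internal vertex and one of
its neighbours coincide, since both continue through the same degree-2 vertices in each direction.
-/

section Idx

variable {V : Type*}

theorem idx_lt_length_iff {l : List V} {v : V} : idx l v < l.length ↔ v ∈ l := by
  classical
  unfold idx
  exact List.idxOf_lt_length_iff

theorem getElem_idx {l : List V} {v : V} (h : v ∈ l) :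
    l[idx l v]'(idx_lt_length_iff.2 h) = v := by
  classical
  unfold idx
  exact List.getElem_idxOf _

theorem idx_getElem {l : List V} (hl : l.Nodup) {i : ℕ} (h : i < l.length) : idx l l[i] = i := by
  classical
  unfold idx
  exact hl.idxOf_getElem i h

theorem idx_inj {l : List V} {u v : V} (hu : u ∈ l) : idx l u = idx l v ↔ u = v := by
  classical
  unfold idx
  exact List.idxOf_inj hu

theorem idx_cons_self (l : List V) (v : V) : idx (v :: l) v = 0 := by
  classical
  unfold idx
  exact List.idxOf_cons_self

theorem idx_cons_of_ne (l : List V) {u v : V} (h : u ≠ v) : idx (v :: l) u = idx l u + 1 := by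
  classical
  unfold idx
  exact List.idxOf_cons_ne l (Ne.symm h)

theorem idx_map {W : Type*} {f : V → W} (hf : Function.Injective f) (l : List V) (v : V) :
    idx (l.map f) (f v) = idx l v := by
  induction l with
  | nil => rfl
  | cons a l ih =>
    by_cases h : v = a
    · subst h; simp [idx_cons_self]
    · rw [List.map_cons, idx_cons_of_ne _ (hf.ne h), idx_cons_of_ne _ h, ih]

theorem idx_lt_idx_iff_of_sublist {l₁ l₂ : List V} (h : l₁.Sublist l₂) (hl₂ : l₂.Nodup)
    {u w : V} (hu : u ∈ l₁) (hw : w ∈ l₁) :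
    idx l₁ u < idx l₁ w ↔ idx l₂ u < idx l₂ w := by
  induction h with
  | slnil => simp at hu
  | cons a h ih =>
    have ha := (List.nodup_cons.1 hl₂).1
    have hua : u ≠ a := fun hua => ha (hua ▸ h.subset hu)
    have hwa : w ≠ a := fun hwa => ha (hwa ▸ h.subset hw)
    rw [idx_cons_of_ne _ hua, idx_cons_of_ne _ hwa, Nat.add_lt_add_iff_right]
    exact ih (List.nodup_cons.1 hl₂).2 hu hw
  | cons_cons a h ih =>
    have ih := ih (List.nodup_cons.1 hl₂).2
    by_cases hua : u = a <;> by_cases hwa : w = a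
    · simp [hua, hwa]
    · subst hua; simp [idx_cons_self, idx_cons_of_ne _ hwa]
    · subst hwa; simp [idx_cons_self]
    · rw [List.mem_cons] at hu hw
      rw [idx_cons_of_ne _ hua, idx_cons_of_ne _ hwa, idx_cons_of_ne _ hua, idx_cons_of_ne _ hwa,
        Nat.add_lt_add_iff_right, Nat.add_lt_add_iff_right]
      exact ih (hu.resolve_left hua) (hw.resolve_left hwa)

theorem idx_lt_idx_append_cons_iff {xs ys : List V} {v w : V} (hl : (xs ++ v :: ys).Nodup) :
    idx (xs ++ v :: ys) w < idx (xs ++ v :: ys) v ↔ w ∈ xs := by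
  have hv : v ∉ xs := fun hv => (List.nodup_append.1 hl).2.2 v hv v (by simp) rfl
  classical
  unfold idx
  rw [List.idxOf_append_of_notMem hv, List.idxOf_cons_self]
  by_cases hw : w ∈ xs
  · simp [hw, List.idxOf_append_of_mem hw, List.idxOf_lt_length_iff.2 hw]
  · simp [hw, List.idxOf_append_of_notMem hw]

end Idx

section Greedy

variable {V : Type*} {G : SimpleGraph V}

theorem greedyFrom_of_not_mem {f : V → ℕ} {l : List V} {v : V} (h : v ∉ l) :
    greedyFrom G f l v = f v := by
  induction l generalizing f with
  | nil => rfl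
  | cons a l ih =>
    rw [List.mem_cons, not_or] at h
    rw [greedyFrom, List.foldl_cons, ← greedyFrom, ih h.2, greedyStep, if_neg h.1]

theorem greedy_eq_sInf {l : List V} (hl : l.Nodup) {v : V} (hv : v ∈ l) :
    greedy G l v = sInf {c : ℕ | 1 ≤ c ∧
      ∀ w, G.Adj v w → idx l w < idx l v → greedy G l w ≠ c} := by
  obtain ⟨xs, ys, rfl⟩ := List.append_of_mem hv
  have hvys : v ∉ ys := (List.nodup_cons.1 (List.nodup_append.1 hl).2.1).1
  have hxs : ∀ w ∈ xs, greedy G (xs ++ v :: ys) w = greedyFrom G (fun _ => 0) xs w := by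
    intro w hw
    have hwys : w ∉ v :: ys := fun h => (List.nodup_append.1 hl).2.2 w hw w h rfl
    rw [greedy, greedyFrom, List.foldl_append, ← greedyFrom, greedyFrom_of_not_mem hwys,
      greedyFrom]
  have hvval : greedy G (xs ++ v :: ys) v =
      sInf {c : ℕ | 1 ≤ c ∧ ∀ w, G.Adj v w → greedyFrom G (fun _ => 0) xs w ≠ c} := by
    rw [greedy, greedyFrom, List.foldl_append, List.foldl_cons, ← greedyFrom, ← greedyFrom,
      greedyFrom_of_not_mem hvys, greedyStep, if_pos rfl]
  rw [hvval]
  congr 1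
  ext c
  simp only [Set.mem_ofPred_eq, idx_lt_idx_append_cons_iff hl, and_congr_right_iff]
  intro hc
  refine forall_congr' fun w => imp_congr_right fun _ => ?_
  by_cases hw : w ∈ xs
  · simp [hw, hxs w hw]
  · simp [hw, greedyFrom_of_not_mem hw]
    omega

theorem greedy_spec {l : List V} (hl : l.Nodup) {v : V} (hv : v ∈ l) :
    1 ≤ greedy G l v ∧
      ∀ w, G.Adj v w → idx l w < idx l v → greedy G l w ≠ greedy G l v := by
  rw [greedy_eq_sInf hl hv]
  refine Nat.sInf_mem
    (s := {c : ℕ | 1 ≤ c ∧ ∀ w, G.Adj v w → idx l w < idx l v → greedy G l w ≠ c})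
    ⟨(l.map (greedy G l)).sum + 1, by omega, fun w _ hw => ?_⟩
  have hwl : w ∈ l := idx_lt_length_iff.1 (hw.trans (idx_lt_length_iff.2 hv))
  have := List.le_sum_of_mem (List.mem_map_of_mem (f := greedy G l) hwl)
  omega

theorem greedy_le {l : List V} (hl : l.Nodup) {v : V} (hv : v ∈ l) {c : ℕ} (hc : 1 ≤ c)
    (h : ∀ w, G.Adj v w → idx l w < idx l v → greedy G l w ≠ c) : greedy G l v ≤ c := by
  rw [greedy_eq_sInf hl hv]
  exact Nat.sInf_le ⟨hc, h⟩

theorem greedy_ne_of_adj {l : List V} (hl : l.Nodup) {u v : V} (hu : u ∈ l) (hv : v ∈ l)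
    (h : G.Adj u v) : greedy G l u ≠ greedy G l v := by
  rcases lt_or_gt_of_ne ((idx_inj hu).not.2 (G.ne_of_adj h)) with huv | hvu
  · exact (greedy_spec hl hv).2 u h.symm huv
  · exact ((greedy_spec hl hu).2 v h hvu).symm

end Greedy

section Chi

variable {V : Type*} [Fintype V] {G : SimpleGraph V}

theorem colorable_chi (G : SimpleGraph V) : G.Colorable (chi G) :=
  Nat.sInf_mem (s := {n | G.Colorable n}) ⟨_, G.colorable_of_fintype⟩

theorem chi_induce_le (G : SimpleGraph V) (s : Set V) [Fintype s] : chi (G.induce s) ≤ chi G :=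
  Nat.sInf_le ((colorable_chi G).of_hom (SimpleGraph.Embedding.induce s).toHom)

theorem two_le_chi_of_adj {u v : V} (h : G.Adj u v) : 2 ≤ chi G := by
  obtain ⟨C⟩ := colorable_chi G
  have hne : (C u).val ≠ (C v).val := Fin.val_ne_of_ne (C.valid h)
  have := (C u).isLt
  have := (C v).isLt
  omega

end Chi

theorem SimpleGraph.Preconnected.coloring_eq_iff {W : Type*} {H : SimpleGraph W}
    (hH : H.Preconnected) (C D : H.Coloring (Fin 2)) (x y : W) : C x = C y ↔ D x = D y := by
  have key : ∀ x y, H.Reachable x y → (C x = D x ↔ C y = D y) := by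
    rintro x y ⟨p⟩
    induction p with
    | nil => rfl
    | cons h _ ih =>
      exact ((by decide : ∀ a b c d : Fin 2, a ≠ b → c ≠ d → (a = c ↔ b = d))
        _ _ _ _ (C.valid h) (D.valid h)).trans ih
  exact (by decide : ∀ a b c d : Fin 2, (a = c ↔ b = d) → (a = b ↔ c = d))
    _ _ _ _ (key x y (hH x y))

section ConnOrder

variable {V : Type*} {G : SimpleGraph V} {l : List V}

theorem isConnOrder_iff : IsConnOrder G l ↔ l.Nodup ∧ (∀ v, v ∈ l) ∧
    ∀ v, 0 < idx l v → ∃ w, G.Adj w v ∧ idx l w < idx l v := by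
  refine and_congr_right fun hl => and_congr_right fun hall =>
    ⟨fun h v hv => ?_, fun h i hi => ?_⟩
  · obtain ⟨j, hj, hadj⟩ := h ⟨idx l v, idx_lt_length_iff.2 (hall v)⟩ hv
    refine ⟨l.get j, ?_, ?_⟩
    · simpa [getElem_idx (hall v)] using hadj
    · simpa [idx_getElem hl] using hj
  · obtain ⟨w, hadj, hw⟩ := h (l.get i) (by simpa [idx_getElem hl] using hi)
    refine ⟨⟨idx l w, idx_lt_length_iff.2 (hall w)⟩, by simpa [idx_getElem hl] using hw, ?_⟩
    simpa [getElem_idx (hall w)] using hadj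

theorem IsConnOrder.connected [Nonempty V] (h : IsConnOrder G l) : G.Connected := by
  obtain ⟨hl, hall, hprev⟩ := isConnOrder_iff.1 h
  have hlen : 0 < l.length := List.length_pos_of_mem (hall (Classical.arbitrary V))
  have hreach : ∀ v, G.Reachable l[0] v := by
    intro v
    induction hn : idx l v using Nat.strong_induction_on generalizing v with
    | _ n ih =>
      rcases Nat.eq_zero_or_pos n with rfl | hpos
      · rw [(idx_inj (hall v)).1 (hn.trans (idx_getElem hl hlen).symm)]
      · obtain ⟨w, hadj, hw⟩ := hprev v (hn ▸ hpos)
        exact (ih _ (hn ▸ hw) w rfl).trans hadj.reachable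
  exact ⟨fun u v => (hreach u).symm.trans (hreach v)⟩

theorem IsConnOrder.exists_induce (h : IsConnOrder G l) {S : Set V}
    (hS : ∀ x ∈ S, ∀ w, G.Adj x w → idx l w < idx l x → w ∈ S) :
    ∃ l' : List S, IsConnOrder (G.induce S) l' ∧
      ∀ x : S, greedy (G.induce S) l' x = greedy G l x := by
  classical
  obtain ⟨hl, hall, hprev⟩ := isConnOrder_iff.1 h
  set l' : List S := (l.filter (· ∈ S)).attachWith (· ∈ S)
    fun x hx => by simpa using (List.mem_filter.1 hx).2
  have hmap : l'.map Subtype.val = l.filter (· ∈ S) := List.attachWith_map_subtype_val _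
  have hl' : l'.Nodup := List.Nodup.of_map Subtype.val (hmap ▸ hl.filter _)
  have hmem : ∀ x : S, x ∈ l' := fun x => by simp [l', hall]
  have hidx : ∀ x y : S, idx l' x < idx l' y ↔ idx l x < idx l y := by
    intro x y
    rw [← idx_map Subtype.val_injective, ← idx_map Subtype.val_injective, hmap]
    exact idx_lt_idx_iff_of_sublist List.filter_sublist hl (by simp [hall]) (by simp [hall])
  have hgreedy : ∀ x : S, greedy (G.induce S) l' x = greedy G l x := by
    intro x
    induction hn : idx l' x using Nat.strong_induction_on generalizing x with
    | _ n ih =>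
    rw [greedy_eq_sInf hl' (hmem x), greedy_eq_sInf hl (hall x)]
    congr 1
    ext c
    simp only [Set.mem_ofPred_eq, and_congr_right_iff]
    refine fun _ => ⟨fun H w hadj hw => ?_, fun H w hadj hw => ?_⟩
    · have hw' := (hidx ⟨w, hS x x.2 w hadj hw⟩ x).2 hw
      simpa only [ih _ (hn ▸ hw') _ rfl] using H ⟨w, _⟩ hadj hw'
    · rw [ih _ (hn ▸ hw) _ rfl]
      exact H w hadj ((hidx _ _).1 hw)
  refine ⟨l', isConnOrder_iff.2 ⟨hl', hmem, fun x hx => ?_⟩, hgreedy⟩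
  have hlen : 0 < l'.length := List.length_pos_of_mem (hmem x)
  obtain ⟨w, hadj, hw⟩ := hprev x
    (Nat.zero_lt_of_lt ((hidx l'[0] x).1 (by rwa [idx_getElem hl' hlen])))
  exact ⟨⟨w, hS x x.2 w hadj.symm hw⟩, hadj, (hidx _ _).2 hw⟩

theorem Good.greedy_le_chi [Fintype V] (hG : Good G) (h : IsConnOrder G l) (v : V) :
    greedy G l v ≤ chi G := by
  classical
  obtain ⟨l', hl', hgreedy⟩ := h.exists_induce (S := ↑(Finset.univ : Finset V)) (by simp)
  have : Nonempty ↥(↑(Finset.univ : Finset V) : Set V) := ⟨⟨v, by simp⟩⟩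
  have := hG Finset.univ hl'.connected l' hl' ⟨v, by simp⟩
  rw [hgreedy] at this
  exact this.trans (chi_induce_le G _)

end ConnOrder

theorem SimpleGraph.Colorable.eq_of_adj_of_adj {V : Type*} {G : SimpleGraph V} {S : Set V}
    (hG : G.Colorable 2) (hS : (G.induce S).Preconnected) {c : V → ℕ}
    (hc : ∀ x ∈ S, c x = 1 ∨ c x = 2)
    (hcG : ∀ x ∈ S, ∀ y ∈ S, G.Adj x y → c x ≠ c y)
    {p a b : V} (ha : a ∈ S) (hb : b ∈ S) (hpa : G.Adj p a) (hpb : G.Adj p b) : c a = c b := by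
  obtain ⟨C⟩ := hG
  let D : (G.induce S).Coloring (Fin 2) :=
    SimpleGraph.Coloring.mk (fun x => if c x = 1 then 0 else 1) fun {x y} hxy => by
      have := hcG x x.2 y y.2 hxy
      rcases hc x x.2 with hx | hx <;> rcases hc y y.2 with hy | hy <;> simp_all
  have hD : ∀ x, D x = if c x = 1 then 0 else 1 := fun _ => rfl
  have hCab : C a = C b := (by decide : ∀ x y z : Fin 2, x ≠ z → y ≠ z → x = y)
    _ _ _ (C.valid hpa).symm (C.valid hpb).symm
  have hDab := (hS.coloring_eq_iff (C.comp (SimpleGraph.Embedding.induce S).toHom) D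
    ⟨a, ha⟩ ⟨b, hb⟩).1 hCab
  rcases hc a ha with h | h <;> rcases hc b hb with h' | h' <;> simp_all

section MinimallyBad

variable {V : Type*} [Fintype V] {G : SimpleGraph V} {l : List V}

theorem MinimallyBad.greedy_le_chi_of_ne [DecidableEq V] (hmin : MinimallyBad G)
    (hl : IsConnOrder G l) {p a : V} (hpa : G.Adj p a)
    (hp : ∀ w, G.Adj p w → idx l w < idx l p) :
    (G.induce ↑(Finset.univ.erase p)).Connected ∧
      ∀ u, u ≠ p → greedy G l u ≤ chi G := by
  have hs : ∀ x, x ∈ (↑(Finset.univ.erase p) : Set V) ↔ x ≠ p := by simp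
  obtain ⟨l', hl', hgreedy⟩ := hl.exists_induce (S := ↑(Finset.univ.erase p))
    fun x _ w hadj hw => (hs w).2 fun hwp => (hp x (hwp ▸ hadj.symm)).not_gt (hwp ▸ hw)
  have : Nonempty ↥(↑(Finset.univ.erase p) : Set V) :=
    ⟨⟨a, (hs a).2 (G.ne_of_adj hpa).symm⟩⟩
  have hgood := hmin.2 _ (Finset.erase_ne_self.2 (Finset.mem_univ p)) hl'.connected
  refine ⟨hl'.connected, fun u hu => ?_⟩
  calc greedy G l u = greedy (G.induce ↑(Finset.univ.erase p)) l' ⟨u, (hs u).2 hu⟩ :=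
        (hgreedy ⟨u, (hs u).2 hu⟩).symm
    _ ≤ chi (G.induce ↑(Finset.univ.erase p)) := hgood.greedy_le_chi hl' _
    _ ≤ chi G := chi_induce_le G _

theorem MinimallyBad.idx_lt_of_neighborSet_eq_pair (hmin : MinimallyBad G)
    (hbad : BadOrder G l) {p a b : V} (hN : G.neighborSet p = {a, b})
    (ha : idx l a < idx l p) : idx l p < idx l b := by
  classical
  obtain ⟨hl, hnot⟩ := hbad
  obtain ⟨hnd, hall, -⟩ := isConnOrder_iff.1 hl
  have hnbr : ∀ w, G.Adj p w ↔ w = a ∨ w = b := fun w => by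
    rw [← SimpleGraph.mem_neighborSet, hN, Set.mem_insert_iff, Set.mem_singleton_iff]
  have hpa := (hnbr a).2 (Or.inl rfl)
  have hpb := (hnbr b).2 (Or.inr rfl)
  by_contra! hb
  replace hb := hb.lt_of_ne ((idx_inj (hall b)).not.2 (G.ne_of_adj hpb).symm)
  obtain ⟨hconn, hle⟩ := hmin.greedy_le_chi_of_ne hl hpa fun w hw => by
    rcases (hnbr w).1 hw with rfl | rfl <;> assumption
  have hp : chi G < greedy G l p := by
    by_contra! h
    exact hnot fun v => if hv : v = p then hv ▸ h else hle v hv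
  have hfree : ∀ c, 1 ≤ c → c ≠ greedy G l a → c ≠ greedy G l b →
      greedy G l p ≤ c :=
    fun c hc hca hcb => greedy_le hnd (hall p) hc fun w hw _ => by
      rcases (hnbr w).1 hw with rfl | rfl
      exacts [hca.symm, hcb.symm]
  have h2 := two_le_chi_of_adj hpa
  have hchi : chi G = 2 := by
    have := hfree 1
    have := hfree 2
    have := hfree 3
    omega
  have hrange : ∀ x ∈ (↑(Finset.univ.erase p) : Set V),
      greedy G l x = 1 ∨ greedy G l x = 2 :=
    fun x hx => by
      have := (greedy_spec (G := G) hnd (hall x)).1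
      have := hle x (by simpa using hx)
      omega
  have hab := (hchi ▸ colorable_chi G).eq_of_adj_of_adj hconn.preconnected hrange
    (fun x _ y _ h => greedy_ne_of_adj hnd (hall x) (hall y) h)
    (by simpa using (G.ne_of_adj hpa).symm) (by simpa using (G.ne_of_adj hpb).symm) hpa hpb
  have := hfree 1
  have := hfree 2
  omega

end MinimallyBad

theorem List.exists_isChain_take_gt_drop_lt {α β : Type*} [LinearOrder β] (f : α → β) :
    ∀ L : List α, L.IsChain (fun x y => f x ≠ f y) →
      (∀ i (h : i + 2 < L.length), f L[i] < f L[i + 1] → f L[i + 1] < f L[i + 2]) →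
      ∃ m, (L.take (m + 1)).IsChain (fun x y => f y < f x) ∧
        (L.drop m).IsChain (fun x y => f x < f y)
  | [], _, _ => ⟨0, by simp, by simp⟩
  | [_], _, _ => ⟨0, by simp, by simp⟩
  | x :: y :: L, hne, hpeak => by
    obtain ⟨m, hdec, hinc⟩ := exists_isChain_take_gt_drop_lt f (y :: L) hne.tail
      fun i h => hpeak (i + 1) (by simp at h ⊢; omega)
    rcases (List.isChain_cons_cons.1 hne).1.lt_or_gt with hxy | hxy
    · refine ⟨0, by simp, List.isChain_cons_cons.2 ⟨hxy, ?_⟩⟩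
      match m, L with
      | 0, _ => simpa using hinc
      | _ + 1, [] => simp
      | k + 1, z :: L =>
        have hzy : f z < f y := by simpa using (List.isChain_cons_cons.1 hdec).1
        exact absurd (hpeak 0 (by simp) hxy) (by simpa using hzy.le.not_gt)
    · exact ⟨m + 1, List.isChain_cons_cons.2 ⟨hxy, hdec⟩, hinc⟩

theorem List.exists_eq_append_of_getElem? {α : Type*} {L : List α} {m : ℕ} {v : α}
    (h0 : 0 < m) (h : m + 1 < L.length) (hv : L[m]? = some v) :
    ∃ A x y B, L = A ++ x :: v :: y :: B := by
  obtain ⟨k, rfl⟩ := Nat.exists_eq_add_one_of_ne_zero h0.ne'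
  rw [List.getElem?_eq_getElem (by omega), Option.some_inj] at hv
  refine ⟨L.take k, L[k], L[k + 2], L.drop (k + 3), ?_⟩
  rw [← hv, ← List.drop_eq_getElem_cons, ← List.drop_eq_getElem_cons,
    ← List.drop_eq_getElem_cons, List.take_append_drop]

section FlatPath

variable {V : Type*} {G : SimpleGraph V} {P Q : List V}

theorem IsInducedPath.adj_getElem (hP : IsInducedPath G P) {i : ℕ} (h : i + 1 < P.length) :
    G.Adj P[i] P[i + 1] :=
  (hP.2 ⟨i, by omega⟩ ⟨i + 1, h⟩).2 (Or.inl rfl)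

theorem IsInducedPath.reverse (hP : IsInducedPath G P) : IsInducedPath G P.reverse := by
  refine ⟨List.nodup_reverse.2 hP.1, fun i j => ?_⟩
  have hi := i.2
  have hj := j.2
  simp only [List.length_reverse] at hi hj
  have := hP.2 ⟨P.length - 1 - i, by omega⟩ ⟨P.length - 1 - j, by omega⟩
  simp only [List.get_eq_getElem, List.getElem_reverse] at this ⊢
  rw [this]
  omega

theorem IsFlatPath.reverse (hP : IsFlatPath G P) : IsFlatPath G P.reverse := by
  refine ⟨hP.1.reverse, fun i h0 h1 => ?_⟩
  simp only [List.length_reverse] at h1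
  simpa using hP.2 ⟨P.length - 1 - i, by omega⟩ (by simp; omega) (by simp; omega)

theorem IsMaxFlatPath.reverse (hP : IsMaxFlatPath G P) : IsMaxFlatPath G P.reverse :=
  ⟨hP.1.reverse, fun h => by
    simpa [List.head_reverse, List.getLast_reverse, and_comm] using
      hP.2 (List.reverse_ne_nil_iff.1 h)⟩

theorem IsFlatPath.neighborSet_getElem (hP : IsFlatPath G P) {i : ℕ} (h : i + 2 < P.length) :
    G.neighborSet P[i + 1] = {P[i], P[i + 2]} := by
  have hdeg : (G.neighborSet P[i + 1]).ncard = 2 := hP.2 ⟨i + 1, by omega⟩ (by simp) h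
  have hne : P[i] ≠ P[i + 2] := by
    rw [ne_eq, hP.1.1.getElem_inj_iff]
    omega
  refine (Set.eq_of_subset_of_ncard_le ?_ ?_ (Set.finite_of_ncard_ne_zero (by omega))).symm
  · rintro w (rfl | rfl)
    exacts [(hP.1.adj_getElem (by omega)).symm, hP.1.adj_getElem h]
  · rw [hdeg, Set.ncard_pair hne]


theorem IsInducedPath.adj_of_eq_append (hP : IsInducedPath G P) {A S : List V} {u w : V}
    (h : P = A ++ u :: w :: S) : G.Adj u w := by
  subst h
  simpa using hP.adj_getElem (i := A.length) (by simp)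

theorem IsFlatPath.neighborSet_eq_of_eq_append (hP : IsFlatPath G P) {A S : List V}
    {u w s : V} (h : P = A ++ u :: w :: s :: S) : G.neighborSet w = {u, s} := by
  subst h
  simpa using hP.neighborSet_getElem (i := A.length) (by simp)

theorem IsFlatPath.ncard_neighborSet_of_eq_append (hP : IsFlatPath G P) {A S : List V}
    {u w s : V} (h : P = A ++ u :: w :: s :: S) : (G.neighborSet w).ncard = 2 := by
  subst h
  simpa using hP.2 ⟨A.length + 1, by simp⟩ (by simp) (by simp; omega)

theorem IsMaxFlatPath.ncard_neighborSet_ne_two_of_eq_append (hP : IsMaxFlatPath G P)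
    {A : List V} {w : V} (h : P = A ++ [w]) : (G.neighborSet w).ncard ≠ 2 := by
  subst h
  simpa using (hP.2 (by simp)).2

theorem IsMaxFlatPath.suffix_eq_of_eq_append (hP : IsMaxFlatPath G P) (hQ : IsMaxFlatPath G Q)
    {S : List V} : ∀ {T A B : List V} {u w : V},
      P = A ++ u :: w :: S → Q = B ++ u :: w :: T → S = T := by
  induction S with
  | nil =>
    rintro (_ | ⟨t, T⟩) A B u w hPe hQe
    · rfl
    · exact absurd (hQ.1.ncard_neighborSet_of_eq_append hQe)
        (hP.ncard_neighborSet_ne_two_of_eq_append (A := A ++ [u]) (by simp [hPe]))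
  | cons s S ih =>
    rintro (_ | ⟨t, T⟩) A B u w hPe hQe
    · exact absurd (hP.1.ncard_neighborSet_of_eq_append hPe)
        (hQ.ncard_neighborSet_ne_two_of_eq_append (A := B ++ [u]) (by simp [hQe]))
    · have hus : u ≠ s := by
        have := hPe ▸ hP.1.1.1
        simp_all [List.nodup_append]
      have hpair := (hP.1.neighborSet_eq_of_eq_append hPe).symm.trans
        (hQ.1.neighborSet_eq_of_eq_append hQe)
      obtain rfl : s = t := by
        rcases Set.pair_eq_pair_iff.1 hpair with ⟨-, h⟩ | ⟨rfl, rfl⟩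
        exacts [h, rfl]
      rw [ih (T := T) (A := A ++ [u]) (B := B ++ [u]) (u := w) (w := s) (by simp [hPe])
        (by simp [hQe])]

theorem IsMaxFlatPath.eq_of_eq_append (hP : IsMaxFlatPath G P)
    (hQ : IsMaxFlatPath G Q) {A B S T : List V} {u w : V} (hPe : P = A ++ u :: w :: S)
    (hQe : Q = B ++ u :: w :: T) : P = Q := by
  have hST := hP.suffix_eq_of_eq_append hQ hPe hQe
  have hAB := hP.reverse.suffix_eq_of_eq_append hQ.reverse (S := A.reverse) (T := B.reverse)
    (A := S.reverse) (B := T.reverse) (u := w) (w := u) (by simp [hPe]) (by simp [hQe])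
  rw [hPe, hQe, hST, List.reverse_inj.1 hAB]

theorem IsMaxFlatPath.eq_or_eq_reverse (hP : IsMaxFlatPath G P) (hQ : IsMaxFlatPath G Q)
    {A B C T : List V} {x y x' v : V} (hPe : P = A ++ x :: v :: y :: B)
    (hQe : Q = C ++ x' :: v :: T) : P = Q ∨ P = Q.reverse := by
  have hx' : x' ∈ G.neighborSet v := (hQ.1.1.adj_of_eq_append hQe).symm
  rw [hP.1.neighborSet_eq_of_eq_append hPe, Set.mem_insert_iff, Set.mem_singleton_iff] at hx'
  rcases hx' with rfl | rfl
  · exact Or.inl (hP.eq_of_eq_append hQ hPe hQe)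
  · refine Or.inr (List.reverse_eq_iff.1 ?_)
    exact hP.reverse.eq_of_eq_append hQ (A := B.reverse) (S := x :: A.reverse)
      (by simp [hPe]) hQe

end FlatPath

theorem IsConnOrder.idx_eq_zero_of_neighborSet_eq_pair {V : Type*} {G : SimpleGraph V}
    {l : List V} (h : IsConnOrder G l) {p a b : V} (hN : G.neighborSet p = {a, b})
    (ha : idx l p < idx l a) (hb : idx l p < idx l b) : idx l p = 0 := by
  obtain ⟨-, -, hprev⟩ := isConnOrder_iff.1 h
  by_contra! hp
  obtain ⟨w, hadj, hw⟩ := hprev p (Nat.pos_of_ne_zero hp)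
  have hw' : w ∈ G.neighborSet p := hadj.symm
  rw [hN, Set.mem_insert_iff, Set.mem_singleton_iff] at hw'
  rcases hw' with rfl | rfl <;> omega

theorem IsFlatPath.wellOrderedPath_or {V : Type*} [Fintype V] {G : SimpleGraph V}
    {l P : List V} (hmin : MinimallyBad G) (hbad : BadOrder G l) {v1 : V}
    (hv1 : l.head? = some v1) (hP : IsFlatPath G P) :
    WellOrderedPath l P ∨
      ∃ m, 0 < m ∧ m + 1 < P.length ∧ P[m]? = some v1 ∧
        WellOrderedPath l (P.take (m + 1)) ∧ WellOrderedPath l (P.drop m) := by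
  obtain ⟨-, hall, -⟩ := isConnOrder_iff.1 hbad.1
  obtain ⟨m, hdec, hinc⟩ := List.exists_isChain_take_gt_drop_lt (idx l) P
    (hP.1.1.isChain.imp fun _ _ hne => (idx_inj (hall _)).not.2 hne)
    fun _ h hlt => hmin.idx_lt_of_neighborSet_eq_pair hbad (hP.neighborSet_getElem h) hlt
  by_cases hm0 : m = 0
  · exact Or.inl (Or.inl (List.isChain_iff_pairwise.1 (by simpa [hm0] using hinc)))
  by_cases hlen : P.length ≤ m + 1
  · rw [List.take_of_length_le hlen] at hdec
    exact Or.inl (Or.inr (List.isChain_iff_pairwise.1 hdec))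
  obtain ⟨k, rfl⟩ := Nat.exists_eq_add_one_of_ne_zero hm0
  have hleft : idx l P[k + 1] < idx l P[k] := by
    have := List.isChain_iff_getElem.1 hdec k (by simp; omega)
    rwa [List.getElem_take, List.getElem_take] at this
  have hright : idx l P[k + 1] < idx l P[k + 2] := by
    simpa using List.isChain_iff_getElem.1 hinc 0 (by simp; omega)
  have hsource := hbad.1.idx_eq_zero_of_neighborSet_eq_pair
    (hP.neighborSet_getElem (by omega)) hleft hright
  obtain ⟨t, rfl⟩ := List.head?_eq_some_iff.1 hv1
  rw [← idx_cons_self t v1, idx_inj (hall _)] at hsource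
  exact Or.inr ⟨k + 1, by omega, by omega, by rw [List.getElem?_eq_getElem (by omega), hsource],
    Or.inr (List.isChain_iff_pairwise.1 hdec), Or.inl (List.isChain_iff_pairwise.1 hinc)⟩

theorem stmt13 {V : Type*} [Fintype V] (G : SimpleGraph V) (l : List V)
    (hmin : MinimallyBad G) (hbad : BadOrder G l)
    (v1 : V) (hv1 : l.head? = some v1) :
    (∀ P : List V, IsFlatPath G P →
      (WellOrderedPath l P ∨
        ∃ m, 0 < m ∧ m + 1 < P.length ∧ P[m]? = some v1 ∧
          WellOrderedPath l (P.take (m + 1)) ∧ WellOrderedPath l (P.drop m))) ∧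
    (∀ P Q : List V, IsMaxFlatPath G P → IsMaxFlatPath G Q →
      ¬ WellOrderedPath l P → ¬ WellOrderedPath l Q → P = Q ∨ P = Q.reverse) := by
  refine ⟨fun P hP => hP.wellOrderedPath_or hmin hbad hv1, fun P Q hP hQ hnP hnQ => ?_⟩
  obtain ⟨m, hm0, hm, hPm, -⟩ := (hP.1.wellOrderedPath_or hmin hbad hv1).resolve_left hnP
  obtain ⟨n, hn0, hn, hQn, -⟩ := (hQ.1.wellOrderedPath_or hmin hbad hv1).resolve_left hnQ
  obtain ⟨A, x, y, B, hPe⟩ := List.exists_eq_append_of_getElem? hm0 hm hPm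
  obtain ⟨C, x', y', D, hQe⟩ := List.exists_eq_append_of_getElem? hn0 hn hQn
  exact hP.eq_or_eq_reverse hQ hPe hQe
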